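/- Let D be the Toeplitz digraph of T_n⟨S;T⟩ with max S + min T ≤ n and min S + max T ≤ n, let d = gcd{s + t : s ∈ S, t ∈ T} and d' = gcd(d, min S). Then d/d' is the smallest positive integer p with the following property: there exists a positive integer M such that for every integer m ≥ M and all vertices u, v of D, there is a directed (u,v)-walk of length m in D if and only if there is a directed (u,v)-walk of length m + p in D. (That is, the matrix period of T_n⟨S;T⟩ is d/d'.) -/

import Mathlib

/-!
Since `d ∣ s + t` for all `s ∈ S`, `t ∈ T`, every arc changes the vertex by a number congruent
to `s₀ = min S` modulo `d`, so a `(u,v)`-walk of length `m` forces `v ≡ u + m s₀ [ZMOD d]`.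
Conversely this congruence suffices once `m` is large. With `t₀ = min T`, Bézout provides a
bounded number of arcs that fix `v - u + m t₀` modulo `s₀ + t₀`, and the remaining length is
filled with arcs `+s₀` and `-t₀`. Because `s + t₀ ≤ n` and `s₀ + t ≤ n`, these padding arcs can be
scheduled so that the walk never leaves `[1, n]` and each extra arc starts at a vertex where it
fits. Hence, for large `m`, walks of lengths `m` and `m + p` join the same pairs of vertices iff
`d ∣ p s₀`, i.e. iff `d / gcd d s₀ ∣ p`.
-/

/-- The Toeplitz digraph of `T_n⟨S;T⟩`: vertices are integers in `[1, n]`, and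
there is an arc `(u, v)` iff `v − u ∈ S` or `u − v ∈ T`. -/
def ToepArc (n : ℕ) (S T : Finset ℕ) (u v : ℤ) : Prop :=
  u ∈ Finset.Icc (1 : ℤ) (n : ℤ) ∧ v ∈ Finset.Icc (1 : ℤ) (n : ℤ) ∧
    ((∃ s ∈ S, v = u + (s : ℤ)) ∨ (∃ t ∈ T, v = u - (t : ℤ)))

/-- There is a directed `(u,v)`-walk of length `m` in the Toeplitz digraph. -/
def HasWalk (n : ℕ) (S T : Finset ℕ) (m : ℕ) (u v : ℤ) : Prop :=
  ∃ w : ℕ → ℤ, w 0 = u ∧ w m = v ∧ ∀ i < m, ToepArc n S T (w i) (w (i + 1))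

open Finset

section Walks

variable {n : ℕ} {S T : Finset ℕ}

theorem hasWalk_zero_iff {u v : ℤ} : HasWalk n S T 0 u v ↔ u = v :=
  ⟨fun ⟨_, h₀, h₁, _⟩ => h₀.symm.trans h₁, fun h => ⟨fun _ => u, rfl, h, by simp⟩⟩

theorem hasWalk_succ_iff {m : ℕ} {u v : ℤ} :
    HasWalk n S T (m + 1) u v ↔ ∃ w, ToepArc n S T u w ∧ HasWalk n S T m w v := by
  constructor
  · rintro ⟨f, h₀, h₁, hf⟩
    exact ⟨f 1, h₀ ▸ hf 0 m.succ_pos, fun i => f (i + 1), rfl, h₁, fun i hi => hf _ (by omega)⟩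
  · rintro ⟨w, huw, f, h₀, h₁, hf⟩
    refine ⟨fun i => if i = 0 then u else f (i - 1), rfl, by simpa using h₁, fun i hi => ?_⟩
    rcases i with _ | i
    · simpa [h₀] using huw
    · simpa using hf i (by omega)

theorem HasWalk.append {m₁ m₂ : ℕ} {u w v : ℤ} (h₁ : HasWalk n S T m₁ u w)
    (h₂ : HasWalk n S T m₂ w v) : HasWalk n S T (m₁ + m₂) u v := by
  induction m₁ generalizing u with
  | zero => rwa [hasWalk_zero_iff.1 h₁, zero_add]
  | succ m ih =>
    obtain ⟨x, hux, hxw⟩ := hasWalk_succ_iff.1 h₁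
    rw [Nat.add_right_comm]
    exact hasWalk_succ_iff.2 ⟨x, hux, ih hxw⟩

theorem ToepArc.modEq {d s₀ t₀ : ℕ} (hd : ∀ s ∈ S, ∀ t ∈ T, (d : ℤ) ∣ s + t) (hs₀ : s₀ ∈ S)
    (ht₀ : t₀ ∈ T) {u w : ℤ} (h : ToepArc n S T u w) : w ≡ u + s₀ [ZMOD d] := by
  obtain ⟨-, -, ⟨s, hs, rfl⟩ | ⟨t, ht, rfl⟩⟩ := h
  · rw [Int.modEq_iff_dvd, show u + s₀ - (u + s) = (s₀ + t₀ : ℤ) - (s + t₀) by ring]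
    exact dvd_sub (hd s₀ hs₀ t₀ ht₀) (hd s hs t₀ ht₀)
  · rw [Int.modEq_iff_dvd, show u + s₀ - (u - t) = (s₀ + t : ℤ) by ring]
    exact hd s₀ hs₀ t ht

theorem HasWalk.modEq {d s₀ t₀ m : ℕ} (hd : ∀ s ∈ S, ∀ t ∈ T, (d : ℤ) ∣ s + t) (hs₀ : s₀ ∈ S)
    (ht₀ : t₀ ∈ T) {u v : ℤ} (h : HasWalk n S T m u v) : v ≡ u + m * s₀ [ZMOD d] := by
  induction m generalizing u with
  | zero => simp [hasWalk_zero_iff.1 h, Int.ModEq.refl]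
  | succ m ih =>
    obtain ⟨w, huw, hwv⟩ := hasWalk_succ_iff.1 h
    calc v ≡ w + m * s₀ [ZMOD d] := ih hwv
      _ ≡ u + s₀ + m * s₀ [ZMOD d] := (huw.modEq hd hs₀ ht₀).add_right _
      _ = u + (m + 1 : ℕ) * s₀ := by push_cast; ring

theorem hasWalk_of_mul_sub_mul_eq {s t : ℕ} (hs : s ∈ S) (ht : t ∈ T) (hst : s + t ≤ n)
    {a b : ℕ} {x y : ℤ} (hx : x ∈ Icc (1 : ℤ) n) (hy : y ∈ Icc (1 : ℤ) n)
    (h : a * s - b * t = y - x) : HasWalk n S T (a + b) x y := by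
  -- Greedy: go up while possible; otherwise `x > n - s ≥ t` leaves room to go down.
  induction hab : a + b generalizing a b x with
  | zero =>
    obtain ⟨rfl, rfl⟩ : a = 0 ∧ b = 0 := by omega
    exact hasWalk_zero_iff.2 (by simp at h; linarith)
  | succ k ih =>
    rw [mem_Icc] at hx hy
    have down : ∀ b', b = b' + 1 → 1 ≤ x - t → HasWalk n S T (k + 1) x y := by
      rintro b' rfl hxt
      refine hasWalk_succ_iff.2 ⟨x - t, ⟨mem_Icc.2 hx, mem_Icc.2 ⟨hxt, by omega⟩,
        Or.inr ⟨t, ht, rfl⟩⟩, ih (a := a) (b := b') (mem_Icc.2 ⟨hxt, by omega⟩) ?_ (by omega)⟩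
      push_cast at h; linear_combination h
    rcases a with _ | a
    · obtain ⟨b', rfl⟩ : ∃ b', b = b' + 1 := ⟨b - 1, by omega⟩
      refine down b' rfl ?_
      push_cast at h; nlinarith
    · by_cases hup : x + s ≤ n
      · refine hasWalk_succ_iff.2 ⟨x + s, ⟨mem_Icc.2 hx, mem_Icc.2 ⟨by omega, hup⟩,
          Or.inl ⟨s, hs, rfl⟩⟩, ih (a := a) (b := b) (mem_Icc.2 ⟨by omega, hup⟩) ?_ (by omega)⟩
        push_cast at h; linear_combination h
      · rcases b with _ | b'
        · push_cast at h; nlinarith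
        · exact down b' rfl (by omega)

end Walks

theorem exists_sub_mul_mem_Icc {x t : ℤ} (hx : 1 ≤ x) (ht : 0 < t) :
    ∃ k : ℕ, x - k * t ∈ Set.Icc 1 t ∧ (k : ℤ) < x := by
  have hq : 0 ≤ (x - 1) / t := Int.ediv_nonneg (by omega) ht.le
  refine ⟨((x - 1) / t).toNat, ?_⟩
  rw [Int.toNat_of_nonneg hq]
  have := Int.mul_ediv_add_emod (x - 1) t
  have := Int.emod_nonneg (x - 1) ht.ne'
  have := Int.emod_lt_of_pos (x - 1) ht
  exact ⟨⟨by linarith, by linarith⟩, by nlinarith⟩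

section Realizable

variable {n : ℕ} {S T : Finset ℕ}

def stepVectors (S T : Finset ℕ) : Set (ℕ × ℤ) :=
  (fun s : ℕ => (1, (s : ℤ))) '' S ∪ (fun t : ℕ => (1, -(t : ℤ))) '' T

-- `p = (ℓ, δ)` counts the arcs inserted besides `a` arcs `+s₀` and `b` arcs `-t₀`, and their
-- total displacement; `n` padding arcs per inserted arc suffice to reach a vertex where it fits.
def Realizable (n : ℕ) (S T : Finset ℕ) (s₀ t₀ : ℕ) (p : ℕ × ℤ) : Prop :=
  ∀ a b : ℕ, n * p.1 ≤ a → n * p.1 ≤ b → ∀ x ∈ Icc (1 : ℤ) n, ∀ y ∈ Icc (1 : ℤ) n,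
    a * s₀ - b * t₀ + p.2 = y - x → HasWalk n S T (a + b + p.1) x y

theorem realizable_zero {s₀ t₀ : ℕ} (hs₀ : s₀ ∈ S) (ht₀ : t₀ ∈ T) (hst : s₀ + t₀ ≤ n) :
    Realizable n S T s₀ t₀ 0 := fun a b _ _ _ hx _ hy h =>
  hasWalk_of_mul_sub_mul_eq (a := a) (b := b) hs₀ ht₀ hst hx hy (by simpa using h)

theorem Realizable.add_up {s₀ t₀ s : ℕ} {p : ℕ × ℤ} (hs : s ∈ S) (ht₀ : t₀ ∈ T)
    (hst : s + t₀ ≤ n) (ht₀pos : 0 < t₀) (hp : Realizable n S T s₀ t₀ p) :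
    Realizable n S T s₀ t₀ ((1, (s : ℤ)) + p) := by
  intro a b ha hb x hx y hy h
  simp only [Prod.fst_add, Prod.snd_add, mul_add, mul_one] at ha hb h ⊢
  have hx' := mem_Icc.1 hx
  -- Descend by `t₀` into `[1, t₀]`, where the arc `+s` fits since `s + t₀ ≤ n`.
  obtain ⟨k, ⟨hk₁, hkt⟩, hkx⟩ :=
    exists_sub_mul_mem_Icc (t := t₀) hx'.1 (by exact_mod_cast ht₀pos)
  have hkb : k ≤ b := by omega
  have hdesc : HasWalk n S T (0 + k) x (x - k * t₀) :=
    hasWalk_of_mul_sub_mul_eq hs ht₀ hst hx (mem_Icc.2 ⟨hk₁, by omega⟩) (by ring)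
  have hstep : ToepArc n S T (x - k * t₀) (x - k * t₀ + s) :=
    ⟨mem_Icc.2 ⟨hk₁, by omega⟩, mem_Icc.2 ⟨by omega, by omega⟩, Or.inl ⟨s, hs, rfl⟩⟩
  have hrest := hp a (b - k) (by omega) (by omega) (x - k * t₀ + s)
    (mem_Icc.2 ⟨by omega, by omega⟩) y hy (by push_cast [Nat.cast_sub hkb]; linear_combination h)
  convert hdesc.append (hasWalk_succ_iff.2 ⟨_, hstep, hrest⟩) using 1
  omega

theorem Realizable.add_down {s₀ t₀ t : ℕ} {p : ℕ × ℤ} (ht : t ∈ T) (hs₀ : s₀ ∈ S)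
    (hst : s₀ + t ≤ n) (hs₀pos : 0 < s₀) (hp : Realizable n S T s₀ t₀ p) :
    Realizable n S T s₀ t₀ ((1, -(t : ℤ)) + p) := by
  intro a b ha hb x hx y hy h
  simp only [Prod.fst_add, Prod.snd_add, mul_add, mul_one] at ha hb h ⊢
  have hx' := mem_Icc.1 hx
  -- Ascend by `s₀` into `[n + 1 - s₀, n]`, where the arc `-t` fits since `s₀ + t ≤ n`.
  obtain ⟨k, ⟨hk₁, hks⟩, hkx⟩ :=
    exists_sub_mul_mem_Icc (x := n + 1 - x) (t := s₀) (by omega) (by exact_mod_cast hs₀pos)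
  have hka : k ≤ a := by omega
  have hasc : HasWalk n S T (k + 0) x (x + k * s₀) :=
    hasWalk_of_mul_sub_mul_eq hs₀ ht hst hx (mem_Icc.2 ⟨by nlinarith, by omega⟩) (by ring)
  have hstep : ToepArc n S T (x + k * s₀) (x + k * s₀ - t) :=
    ⟨mem_Icc.2 ⟨by nlinarith, by omega⟩, mem_Icc.2 ⟨by omega, by omega⟩, Or.inr ⟨t, ht, rfl⟩⟩
  have hrest := hp (a - k) b (by omega) (by omega) (x + k * s₀ - t)
    (mem_Icc.2 ⟨by omega, by omega⟩) y hy (by push_cast [Nat.cast_sub hka]; linear_combination h)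
  convert hasc.append (hasWalk_succ_iff.2 ⟨_, hstep, hrest⟩) using 1
  omega

theorem realizable_of_mem_closure {s₀ t₀ : ℕ} (hs₀ : s₀ ∈ S) (ht₀ : t₀ ∈ T) (hs₀pos : 0 < s₀)
    (ht₀pos : 0 < t₀) (hS : ∀ s ∈ S, s + t₀ ≤ n) (hT : ∀ t ∈ T, s₀ + t ≤ n) {p : ℕ × ℤ}
    (hp : p ∈ AddSubmonoid.closure (stepVectors S T)) : Realizable n S T s₀ t₀ p := by
  induction hp using AddSubmonoid.closure_induction_left with
  | zero => exact realizable_zero hs₀ ht₀ (hS s₀ hs₀)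
  | add_left q hq p _ ih =>
    rcases hq with ⟨s, hs, rfl⟩ | ⟨t, ht, rfl⟩
    · exact ih.add_up hs ht₀ (hS s hs) ht₀pos
    · exact ih.add_down ht hs₀ (hT t ht) hs₀pos

end Realizable

theorem exists_mem_closure_modEq {M ι : Type*} [AddCommMonoid M] (ψ : M →+ ℤ) {Γ : Set M}
    {σ : ℕ} (hσ : 0 < σ) (I : Finset ι) (γ : ι → M) (hγ : ∀ i ∈ I, γ i ∈ Γ) (z : ι → ℤ) :
    ∃ e ∈ AddSubmonoid.closure Γ, ψ e ≡ ∑ i ∈ I, z i * ψ (γ i) [ZMOD σ] := by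
  refine ⟨∑ i ∈ I, (z i % σ).toNat • γ i,
    sum_mem fun i hi => nsmul_mem (AddSubmonoid.subset_closure (hγ i hi)) _, ?_⟩
  rw [map_sum]
  refine Int.ModEq.sum fun i _ => ?_
  rw [map_nsmul, nsmul_eq_mul, Int.toNat_of_nonneg (Int.emod_nonneg _ (by omega))]
  exact (Int.mod_modEq _ _).mul_right _

theorem gcd_natCast_dvd_natCast_gcd {ι : Type*} (I : Finset ι) (f : ι → ℕ) :
    I.gcd (fun i => (f i : ℤ)) ∣ (I.gcd f : ℕ) := by
  rw [← Int.natAbs_dvd]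
  exact Int.natCast_dvd_natCast.2
    (Finset.dvd_gcd fun i hi => Int.natAbs_dvd_natAbs.2 (Finset.gcd_dvd hi))

theorem exists_mem_closure_stepVectors_modEq (S T : Finset ℕ) (t₀ : ℕ) {σ : ℕ} (hσ : 0 < σ) :
    ∃ e ∈ AddSubmonoid.closure (stepVectors S T),
      e.2 + e.1 * t₀ ≡ ((S ×ˢ T).gcd (fun p => p.1 + p.2) : ℕ) [ZMOD σ] := by
  -- `ψ (1, s) - ψ (1, -t) = s + t`, so Bézout for the sums `s + t` combines values of `ψ`.
  let ψ : ℕ × ℤ →+ ℤ := AddMonoidHom.mk' (fun e => e.2 + e.1 * t₀) fun a b => by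
    simp only [Prod.fst_add, Prod.snd_add]; push_cast; ring
  obtain ⟨f, hf⟩ := Finset.gcd_eq_sum_mul (S ×ˢ T) (fun p => ((p.1 + p.2 : ℕ) : ℤ))
  obtain ⟨c, hc⟩ := gcd_natCast_dvd_natCast_gcd (S ×ˢ T) (fun p => p.1 + p.2)
  obtain ⟨e₁, he₁, h₁⟩ := exists_mem_closure_modEq ψ (Γ := stepVectors S T) hσ (S ×ˢ T)
    (fun p => ((1, (p.1 : ℤ)) : ℕ × ℤ)) (fun p hp => Or.inl ⟨p.1, (mem_product.1 hp).1, rfl⟩)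
    (fun p => f p * c)
  obtain ⟨e₂, he₂, h₂⟩ := exists_mem_closure_modEq ψ (Γ := stepVectors S T) hσ (S ×ˢ T)
    (fun p => ((1, -(p.2 : ℤ)) : ℕ × ℤ)) (fun p hp => Or.inr ⟨p.2, (mem_product.1 hp).2, rfl⟩)
    (fun p => -(f p * c))
  refine ⟨e₁ + e₂, add_mem he₁ he₂, ?_⟩
  convert h₁.add h₂ using 1
  · simp only [ψ, AddMonoidHom.mk'_apply, Prod.fst_add, Prod.snd_add]; push_cast; ring
  · rw [hc, hf, Finset.sum_mul, ← Finset.sum_add_distrib]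
    refine Finset.sum_congr rfl fun p _ => ?_
    simp only [ψ, AddMonoidHom.mk'_apply]; push_cast; ring

theorem exists_bounded_mem_closure_stepVectors_modEq (S T : Finset ℕ) (t₀ : ℕ) {σ : ℕ}
    (hσ : 0 < σ) : ∃ K D : ℕ, ∀ r : ℤ, (((S ×ˢ T).gcd (fun p => p.1 + p.2) : ℕ) : ℤ) ∣ r →
      ∃ e ∈ AddSubmonoid.closure (stepVectors S T),
        e.1 ≤ K ∧ |e.2| ≤ D ∧ e.2 + e.1 * t₀ ≡ r [ZMOD σ] := by
  obtain ⟨e₁, he₁, h₁⟩ := exists_mem_closure_stepVectors_modEq S T t₀ hσ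
  refine ⟨σ * e₁.1, σ * e₁.2.natAbs, ?_⟩
  rintro _ ⟨q, rfl⟩
  have hq₀ : 0 ≤ q % σ := Int.emod_nonneg _ (by omega)
  have hqσ : q % σ < σ := Int.emod_lt_of_pos _ (by omega)
  refine ⟨(q % σ).toNat • e₁, nsmul_mem he₁ _, ?_, ?_, ?_⟩
  · rw [Prod.smul_fst, smul_eq_mul]
    exact Nat.mul_le_mul_right _ (by omega)
  · rw [Prod.smul_snd, nsmul_eq_mul, abs_mul, Nat.abs_cast, Int.toNat_of_nonneg hq₀]
    push_cast
    exact mul_le_mul_of_nonneg_right hqσ.le (abs_nonneg _)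
  · rw [Prod.smul_fst, Prod.smul_snd, smul_eq_mul, nsmul_eq_mul]
    push_cast
    rw [Int.toNat_of_nonneg hq₀, mul_assoc, ← mul_add, mul_comm _ q]
    exact (Int.mod_modEq q σ).mul h₁

theorem exists_add_eq_mul_sub_mul_eq {s t N B : ℕ} {R : ℤ} (hs : 0 < s) (ht : 0 < t)
    (hdvd : ((s + t : ℕ) : ℤ) ∣ R + N * t) (hN : |R| + B * (s + t) ≤ N) :
    ∃ a b : ℕ, a + b = N ∧ a * s - b * t = R ∧ B ≤ a ∧ B ≤ b := by
  obtain ⟨q, hq⟩ := hdvd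
  push_cast at hq
  have hσ : (0 : ℤ) < s + t := by positivity
  have hNs : (N : ℤ) ≤ N * s := le_mul_of_one_le_right (by positivity) (by exact_mod_cast hs)
  have hNt : (N : ℤ) ≤ N * t := le_mul_of_one_le_right (by positivity) (by exact_mod_cast ht)
  have hBq : (B : ℤ) ≤ q :=
    le_of_mul_le_mul_left (by linarith [neg_abs_le R]) hσ
  have hqN : q + B ≤ N :=
    le_of_mul_le_mul_left (by linarith [le_abs_self R]) hσ
  refine ⟨q.toNat, N - q.toNat, by omega, ?_, by omega, by omega⟩
  rw [Nat.cast_sub (by omega), Int.toNat_of_nonneg (by omega)]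
  linear_combination -hq

theorem exists_hasWalk_of_modEq {n : ℕ} {S T : Finset ℕ} {s₀ t₀ : ℕ} (hs₀ : s₀ ∈ S)
    (ht₀ : t₀ ∈ T) (hs₀pos : 0 < s₀) (ht₀pos : 0 < t₀) (hS : ∀ s ∈ S, s + t₀ ≤ n)
    (hT : ∀ t ∈ T, s₀ + t ≤ n) :
    ∃ M : ℕ, ∀ m ≥ M, ∀ u ∈ Icc (1 : ℤ) n, ∀ v ∈ Icc (1 : ℤ) n,
      v ≡ u + m * s₀ [ZMOD ((S ×ˢ T).gcd (fun p => p.1 + p.2) : ℕ)] → HasWalk n S T m u v := by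
  set d := (S ×ˢ T).gcd (fun p => p.1 + p.2)
  obtain ⟨K, D, hKD⟩ :=
    exists_bounded_mem_closure_stepVectors_modEq S T t₀ (σ := s₀ + t₀) (by omega)
  refine ⟨K + n + D + n * K * (s₀ + t₀), fun m hm u hu v hv huv => ?_⟩
  have hdσ : (d : ℤ) ∣ s₀ + t₀ :=
    Int.natCast_dvd_natCast.2 (Finset.gcd_dvd (b := (s₀, t₀)) (mem_product.2 ⟨hs₀, ht₀⟩))
  obtain ⟨e, he, heK, heD, hψ⟩ := hKD (v - u + m * t₀) (by
    rw [show v - u + m * t₀ = m * (s₀ + t₀) - (u + m * s₀ - v) by ring]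
    exact dvd_sub (dvd_mul_of_dvd_right hdσ _) huv.dvd)
  have hem : e.1 ≤ m := by omega
  have hdvd : ((s₀ + t₀ : ℕ) : ℤ) ∣ (v - u - e.2) + (m - e.1 : ℕ) * t₀ := by
    rw [Nat.cast_sub hem]
    convert hψ.dvd using 1
    ring
  have hbound : |v - u - e.2| + (n * e.1 : ℕ) * (s₀ + t₀) ≤ (m - e.1 : ℕ) := by
    have : n * e.1 * (s₀ + t₀) ≤ n * K * (s₀ + t₀) := by gcongr
    have : |v - u| ≤ n := abs_le.2 ⟨by linarith [mem_Icc.1 hu, mem_Icc.1 hv],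
      by linarith [mem_Icc.1 hu, mem_Icc.1 hv]⟩
    have := abs_sub (v - u) e.2
    rw [Nat.cast_sub hem]
    push_cast at *
    linarith
  obtain ⟨a, b, hab, habR, ha, hb⟩ := exists_add_eq_mul_sub_mul_eq hs₀pos ht₀pos hdvd hbound
  convert realizable_of_mem_closure hs₀ ht₀ hs₀pos ht₀pos hS hT he a b ha hb u hu v hv
    (by linarith) using 1
  omega

theorem isLeast_eventual_period {P : ℕ → ℤ → ℤ → Prop} {V : Finset ℤ} (hV : V.Nonempty)
    {d s₀ : ℕ} (hd : 0 < d)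
    (hP : ∃ M : ℕ, ∀ m ≥ M, ∀ u ∈ V, ∀ v ∈ V, (P m u v ↔ v ≡ u + m * s₀ [ZMOD d])) :
    IsLeast {p : ℕ | 0 < p ∧ ∃ M : ℕ, 0 < M ∧ ∀ m : ℕ, M ≤ m → ∀ u ∈ V, ∀ v ∈ V,
      (P m u v ↔ P (m + p) u v)} (d / Nat.gcd d s₀) := by
  obtain ⟨M, hM⟩ := hP
  refine ⟨⟨Nat.div_pos (Nat.gcd_le_left _ hd) (Nat.gcd_pos_of_pos_left _ hd), M + 1, M.succ_pos,
    fun m hm u hu v hv => ?_⟩, ?_⟩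
  · have hdvd : d ∣ d / Nat.gcd d s₀ * s₀ := ⟨s₀ / Nat.gcd d s₀, by
      rw [Nat.div_mul_right_comm (Nat.gcd_dvd_left d s₀),
        Nat.mul_div_assoc _ (Nat.gcd_dvd_right d s₀)]⟩
    have hshift : u + (m + d / Nat.gcd d s₀ : ℕ) * s₀ ≡ u + m * s₀ [ZMOD d] := by
      refine Int.modEq_iff_dvd.2 ?_
      rw [show u + m * s₀ - (u + (m + d / Nat.gcd d s₀ : ℕ) * s₀) =
        -((d / Nat.gcd d s₀ * s₀ : ℕ) : ℤ) by push_cast; ring]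
      exact (Int.natCast_dvd_natCast.2 hdvd).neg_right
    rw [hM m (by omega) u hu v hv,
      hM (m + d / Nat.gcd d s₀) (le_add_right (by omega)) u hu v hv]
    exact ⟨fun h => h.trans hshift.symm, fun h => h.trans hshift⟩
  · rintro p ⟨hp, M', -, hM'⟩
    obtain ⟨w, hw⟩ := hV
    set m := d * (M + M')
    have hm : M + M' ≤ m := Nat.le_mul_of_pos_left _ hd
    have h₀ : w ≡ w + m * s₀ [ZMOD d] :=
      Int.modEq_iff_dvd.2 ⟨(M + M') * s₀, by push_cast [m]; ring⟩
    have h₁ := (hM _ (by omega) w hw w hw).1 ((hM' m (by omega) w hw w hw).1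
      ((hM m (by omega) w hw w hw).2 h₀))
    have hdp : d ∣ p * s₀ := Int.natCast_dvd_natCast.1 (by
      convert (h₀.symm.trans h₁).dvd using 1; push_cast; ring)
    exact Nat.le_of_dvd hp (Nat.modEq_zero_iff_dvd.1
      (Nat.ModEq.cancel_right_div_gcd hd (by simpa using Nat.modEq_zero_iff_dvd.2 hdp)))

theorem matrix_period_eq_general (n : ℕ) (S T : Finset ℕ)
    (hS : S.Nonempty) (hT : T.Nonempty)
    (hSsub : S ⊆ Finset.Icc 1 (n - 1)) (hTsub : T ⊆ Finset.Icc 1 (n - 1))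
    (hST1 : S.max' hS + T.min' hT ≤ n) (hST2 : S.min' hS + T.max' hT ≤ n)
    (d d' : ℕ) (hd : d = (S ×ˢ T).gcd (fun p => p.1 + p.2))
    (hd' : d' = Nat.gcd d (S.min' hS)) :
    IsLeast {p : ℕ | 0 < p ∧ ∃ M : ℕ, 0 < M ∧ ∀ m : ℕ, M ≤ m →
        ∀ u ∈ Finset.Icc (1 : ℤ) (n : ℤ), ∀ v ∈ Finset.Icc (1 : ℤ) (n : ℤ),
          (HasWalk n S T m u v ↔ HasWalk n S T (m + p) u v)}
      (d / d') := by
  subst hd hd'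
  have hs₀ := S.min'_mem hS
  have ht₀ := T.min'_mem hT
  have hs₀pos : 0 < S.min' hS := (mem_Icc.1 (hSsub hs₀)).1
  have ht₀pos : 0 < T.min' hT := (mem_Icc.1 (hTsub ht₀)).1
  have hSn : ∀ s ∈ S, s + T.min' hT ≤ n := fun s hs => by linarith [S.le_max' s hs]
  have hTn : ∀ t ∈ T, S.min' hS + t ≤ n := fun t ht => by linarith [T.le_max' t ht]
  have hdvd : ∀ s ∈ S, ∀ t ∈ T, (((S ×ˢ T).gcd (fun p => p.1 + p.2) : ℕ) : ℤ) ∣ s + t :=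
    fun s hs t ht =>
      Int.natCast_dvd_natCast.2 (Finset.gcd_dvd (b := (s, t)) (mem_product.2 ⟨hs, ht⟩))
  have hd₀ : 0 < (S ×ˢ T).gcd (fun p => p.1 + p.2) :=
    Nat.pos_of_dvd_of_pos (Int.natCast_dvd_natCast.1 (hdvd _ hs₀ _ ht₀)) (by omega)
  obtain ⟨M, hM⟩ := exists_hasWalk_of_modEq hs₀ ht₀ hs₀pos ht₀pos hSn hTn
  exact isLeast_eventual_period ⟨1, mem_Icc.2 ⟨le_rfl, by omega⟩⟩ hd₀
    ⟨M, fun m hm u hu v hv => ⟨HasWalk.modEq hdvd hs₀ ht₀, hM m hm u hu v hv⟩⟩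

/-- If `max S + min T ≤ n` and `min S + max T ≤ n`, then the matrix
period of `T_n⟨S;T⟩` is `d/d'`, i.e. `d/d'` is the least positive `p` such that for all
sufficiently large `m` and all vertices `u, v`, there is a directed `(u,v)`-walk of
length `m` iff there is one of length `m + p`. -/
theorem matrix_period_eq (n : ℕ) (hn : 2 ≤ n) (S T : Finset ℕ)
    (hS : S.Nonempty) (hT : T.Nonempty)
    (hSsub : S ⊆ Finset.Icc 1 (n - 1)) (hTsub : T ⊆ Finset.Icc 1 (n - 1))
    (hST1 : S.max' hS + T.min' hT ≤ n) (hST2 : S.min' hS + T.max' hT ≤ n)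
    (d d' : ℕ) (hd : d = (S ×ˢ T).gcd (fun p => p.1 + p.2))
    (hd' : d' = Nat.gcd d (S.min' hS)) :
    IsLeast {p : ℕ | 0 < p ∧ ∃ M : ℕ, 0 < M ∧ ∀ m : ℕ, M ≤ m →
        ∀ u ∈ Finset.Icc (1 : ℤ) (n : ℤ), ∀ v ∈ Finset.Icc (1 : ℤ) (n : ℤ),
          (HasWalk n S T m u v ↔ HasWalk n S T (m + p) u v)}
      (d / d') :=
  matrix_period_eq_general n S T hS hT hSsub hTsub hST1 hST2 d d' hd hd'
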